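/- Let (𝐬, r(𝐬)) ∈ 𝒮 be prime and stable with 𝐬(0,r_1) ∈ S_←, let 2 ≤ p ≤ r_1, and set 𝐬_p = ([i_1,j_2],[i_2,j_3],…,[i_{p−1},j_p]) ∨ 𝐬(p,r). If 𝐬_p is not connected, then there exists 1 ≤ p′ < min{p, r_1−1} such that j_s < i_{p′} for all p′ + 2 ≤ s ≤ r_2. -/

import Mathlib

/-!
On the first run `𝐬(0,r₁)` the intervals move left, on the second run `𝐬(r₁-1,r₂)` they move
right, and at the turn primeness and stability force `i_{r₁-1} < i_{r₁+1}`. The pairs of `𝐬_p`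
past the cut are pairs of `𝐬`, and each of the others, `([i_q, j_{q+1}], ·)` with `q < p`, is
connected unless `j_{q+2} < i_q` and `q + 2 ≤ r₁`. This gap then persists along the second run:
an interval `[i_s, j_s]` there reaching `i_q` would overlap some `[i_v, j_v]` with `q < v < r₁`,
which (alt2) forbids.
-/

namespace AltSnakePaper

/-- `[i,j] ∈ 𝕀ₙ`: the interval condition `0 ≤ j - i ≤ n + 1`. -/
def InIn (n : ℕ) (i j : ℤ) : Prop := 0 ≤ j - i ∧ j - i ≤ (n : ℤ) + 1

/-- The intervals `[i1,j1]` and `[i2,j2]` overlap. -/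
def Overlap (i1 j1 i2 j2 : ℤ) : Prop :=
  (i1 < i2 ∧ i2 ≤ j1 ∧ j1 < j2) ∨ (i2 < i1 ∧ i1 ≤ j2 ∧ j2 < j1)

/-- The pair `([i1,j1],[i2,j2])` is connected. -/
def ConnPair (n : ℕ) (i1 j1 i2 j2 : ℤ) : Prop :=
  Overlap i1 j1 i2 j2 ∧ InIn n i1 j2 ∧ InIn n i2 j1

/-- The subtuple `𝐬(a,b)` (entries with indices `a+1, …, b`) lies in `S_→`. -/
def SRight (ii jj : ℕ → ℤ) (a b : ℕ) : Prop :=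
  ∀ s, a + 1 ≤ s → s + 1 ≤ b → ii s < ii (s + 1) ∧ jj s < jj (s + 1)

/-- The subtuple `𝐬(a,b)` (entries with indices `a+1, …, b`) lies in `S_←`. -/
def SLeft (ii jj : ℕ → ℤ) (a b : ℕ) : Prop :=
  ∀ s, a + 1 ≤ s → s + 1 ≤ b → ii (s + 1) < ii s ∧ jj (s + 1) < jj s

/-- `(𝐬, r(𝐬))` is an alternating snake, where `𝐬 = ([i_1,j_1],…,[i_r,j_r])`
(encoded by `ii jj : ℕ → ℤ`, entries indexed `1,…,r`) and
`r(𝐬) = (r_0, r_1, …, r_k)` (encoded by `rr : ℕ → ℕ`). -/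
structure IsAltSnake (n r k : ℕ) (rr : ℕ → ℕ) (ii jj : ℕ → ℤ) : Prop where
  hr : 1 ≤ r
  hk : k ≤ r
  mem : ∀ s, 1 ≤ s → s ≤ r → InIn n (ii s) (jj s)
  distinct : ∀ s p, 1 ≤ s → s ≤ r → 1 ≤ p → p ≤ r → s ≠ p → ii s ≠ ii p ∨ jj s ≠ jj p
  rr0 : rr 0 = 1
  rrk : rr k = r
  rrmono : ∀ m, m < k → rr m < rr (m + 1)
  mono : ∀ m, 1 ≤ m → m ≤ k →
      SRight ii jj (rr (m - 1) - 1) (rr m) ∨ SLeft ii jj (rr (m - 1) - 1) (rr m)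
  alt : ∀ m, 1 ≤ m → m < k →
      (SRight ii jj (rr (m - 1) - 1) (rr m) ↔ SLeft ii jj (rr m - 1) (rr (m + 1)))
  nonoverlap : ∀ m s t, 1 ≤ m → m < k → 1 ≤ s → s < rr m → rr m < t → t ≤ r →
      ¬ Overlap (ii s) (jj s) (ii t) (jj t)

/-- The subtuple `𝐬(a,b)` is connected: all consecutive pairs are connected. -/
def SegConnected (n : ℕ) (ii jj : ℕ → ℤ) (a b : ℕ) : Prop :=
  ∀ s, a + 1 ≤ s → s + 1 ≤ b → ConnPair n (ii s) (jj s) (ii (s + 1)) (jj (s + 1))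

/-- The subtuple `𝐬(a,b)` (with its induced r-vector, whose internal break points
are the `rr m` with `a + 1 < rr m < b`) is prime. -/
def SegPrime (n k : ℕ) (rr : ℕ → ℕ) (ii jj : ℕ → ℤ) (a b : ℕ) : Prop :=
  SegConnected n ii jj a b ∧
    ∀ m, 1 ≤ m → m < k → a + 1 < rr m → rr m < b →
      ii (rr m - 1) ≠ ii (rr m + 1) ∧ jj (rr m - 1) ≠ jj (rr m + 1)

/-- The subtuple `𝐬(a,b)` (with its induced r-vector) is stable. -/
def SegStable (k : ℕ) (rr : ℕ → ℕ) (ii jj : ℕ → ℤ) (a b : ℕ) : Prop :=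
  ∀ m, 1 ≤ m → m < k → a + 1 < rr m → rr m < b →
    (ii (rr m + 1) < ii (rr m - 1) → jj (rr m + 1) < ii (rr m - 1)) ∧
    (jj (rr m - 1) < jj (rr m + 1) → jj (rr m - 1) < ii (rr m + 1))

/-- The alternating snake is stable. -/
def Stable (k : ℕ) (rr : ℕ → ℕ) (ii jj : ℕ → ℤ) : Prop :=
  ∀ m, 1 ≤ m → m < k →
    (ii (rr m + 1) < ii (rr m - 1) → jj (rr m + 1) < ii (rr m - 1)) ∧
    (jj (rr m - 1) < jj (rr m + 1) → jj (rr m - 1) < ii (rr m + 1))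

/-- The boundary condition allowing a cut of the snake at `p = rr m - ε`:
`a_{r_m-1} = a_{r_m+1}` for some `a ∈ {i, j}`, with `ε ∈ {0,1}` chosen so that, `b`
denoting the other member of `{i,j}`, one has `b_{r_m−1+2ε} < b_{r_m+1−2ε}` if
`𝐬(r_m−2, r_m) ∈ S_←` and `b_{r_m+1−2ε} < b_{r_m−1+2ε}` if `𝐬(r_m−2, r_m) ∈ S_→`. -/
def BoundaryCond (k : ℕ) (rr : ℕ → ℕ) (ii jj : ℕ → ℤ) (m ε : ℕ) : Prop :=
  (ii (rr m - 1) = ii (rr m + 1) ∧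
    (SLeft ii jj (rr m - 2) (rr m) → jj (rr m - 1 + 2 * ε) < jj (rr m + 1 - 2 * ε)) ∧
    (SRight ii jj (rr m - 2) (rr m) → jj (rr m + 1 - 2 * ε) < jj (rr m - 1 + 2 * ε))) ∨
  (jj (rr m - 1) = jj (rr m + 1) ∧
    (SLeft ii jj (rr m - 2) (rr m) → ii (rr m - 1 + 2 * ε) < ii (rr m + 1 - 2 * ε)) ∧
    (SRight ii jj (rr m - 2) (rr m) → ii (rr m + 1 - 2 * ε) < ii (rr m - 1 + 2 * ε)))

/-- `p` is an admissible cut point for the prime decomposition. -/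
def CutAt (n r k : ℕ) (rr : ℕ → ℕ) (ii jj : ℕ → ℤ) (p : ℕ) : Prop :=
  p = r ∨
  ¬ ConnPair n (ii p) (jj p) (ii (p + 1)) (jj (p + 1)) ∨
  ∃ m ε, 1 ≤ m ∧ m < k ∧ ε ≤ 1 ∧ p = rr m - ε ∧ BoundaryCond k rr ii jj m ε

/-- `0 = c 0 < c 1 < ⋯ < c L = r` are the cut points of a prime decomposition
of the snake, the prime factors being the segments `𝐬(c t, c (t+1))`. -/
def IsPrimeDecomp (n r k : ℕ) (rr : ℕ → ℕ) (ii jj : ℕ → ℤ) (c : ℕ → ℕ) (L : ℕ) : Prop :=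
  1 ≤ L ∧ c 0 = 0 ∧ c L = r ∧ (∀ t, t < L → c t < c (t + 1)) ∧
  (∀ t, t < L → SegPrime n k rr ii jj (c t) (c (t + 1))) ∧
  (∀ t, 1 ≤ t → t ≤ L → CutAt n r k rr ii jj (c t))

/-- The segment `𝐬(a,b)` is contained in a prime factor of `𝐬`. -/
def ContainedInPF (n r k : ℕ) (rr : ℕ → ℕ) (ii jj : ℕ → ℤ) (a b : ℕ) : Prop :=
  ∃ c L t, IsPrimeDecomp n r k rr ii jj c L ∧ t < L ∧ c t ≤ a ∧ b ≤ c (t + 1)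

theorem InIn.mono {n : ℕ} {i j i' j' : ℤ} (h : InIn n i j) (hi : i ≤ i') (hij : i' ≤ j')
    (hj : j' ≤ j) : InIn n i' j' := by
  unfold InIn at *
  omega

theorem Overlap.le_and_lt_of_lt {i₁ j₁ i₂ j₂ : ℤ} (h : Overlap i₁ j₁ i₂ j₂) (hi : i₁ < i₂) :
    i₂ ≤ j₁ ∧ j₁ < j₂ := by
  unfold Overlap at h
  omega

theorem Overlap.le_and_lt_of_gt {i₁ j₁ i₂ j₂ : ℤ} (h : Overlap i₁ j₁ i₂ j₂) (hi : i₂ < i₁) :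
    i₁ ≤ j₂ ∧ j₂ < j₁ := by
  unfold Overlap at h
  omega

section Runs

variable {ii jj : ℕ → ℤ} {a b : ℕ}

theorem SLeft.strictAntiOn_snd (h : SLeft ii jj a b) : StrictAntiOn jj (Set.Icc (a + 1) b) :=
  strictAntiOn_of_add_one_lt Set.ordConnected_Icc fun s _ hs hs' => (h s hs.1 hs'.2).2

theorem SRight.strictMonoOn_fst (h : SRight ii jj a b) : StrictMonoOn ii (Set.Icc (a + 1) b) :=
  strictMonoOn_of_lt_add_one Set.ordConnected_Icc fun s _ hs hs' => (h s hs.1 hs'.2).1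

end Runs

namespace IsAltSnake

variable {n r k : ℕ} {rr : ℕ → ℕ} {ii jj : ℕ → ℤ}

theorem rr_le (h : IsAltSnake n r k rr ii jj) {m : ℕ} (hm : m ≤ k) : rr m ≤ r := by
  induction hm using Nat.decreasingInduction with
  | self => exact h.rrk.le
  | of_succ m hm ih => exact (h.rrmono m hm).le.trans ih

theorem sRight_of_sLeft (h : IsAltSnake n r k rr ii jj) (hk : 2 ≤ k)
    (hdir : SLeft ii jj 0 (rr 1)) (hr1 : 2 ≤ rr 1) : SRight ii jj (rr 1 - 1) (rr 2) := by
  have hfirst : ¬ SRight ii jj (rr 0 - 1) (rr 1) := fun hright => by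
    have := (hright 1 (by simp [h.rr0]) hr1).1
    have := (hdir 1 le_rfl hr1).1
    omega
  have halt := h.alt 1 le_rfl (by omega)
  have hsecond := h.mono 2 (by omega) hk
  exact hsecond.resolve_right fun hleft => hfirst (halt.mpr hleft)

/-- At the first turn the left ends move right: primeness excludes `i_{r₁+1} = i_{r₁-1}`, and
stability would turn `i_{r₁+1} < i_{r₁-1}` into `j_{r₁+1} < i_{r₁-1} ≤ j_{r₁}`. -/
theorem ii_sub_one_lt_ii_add_one (h : IsAltSnake n r k rr ii jj) (hk : 2 ≤ k)
    (hprime : SegPrime n k rr ii jj 0 r) (hstable : Stable k rr ii jj)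
    (hdir : SLeft ii jj 0 (rr 1)) (hr1 : 2 ≤ rr 1) : ii (rr 1 - 1) < ii (rr 1 + 1) := by
  have hr12 : rr 1 < rr 2 := h.rrmono 1 (by omega)
  have hr2 : rr 2 ≤ r := h.rr_le hk
  have hne := (hprime.2 1 le_rfl (by omega) (by omega) (by omega)).1
  refine lt_of_le_of_ne (not_lt.mp fun hlt => ?_) hne
  have hjj := (hstable 1 le_rfl (by omega)).1 hlt
  have hturn : ii (rr 1 - 1) ≤ jj (rr 1) := by
    have hconn := hprime.1 (rr 1 - 1) (by omega) (by omega)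
    have hdec := (hdir (rr 1 - 1) (by omega) (by omega)).1
    rw [Nat.sub_add_cancel (by omega : 1 ≤ rr 1)] at hconn hdec
    exact (hconn.1.le_and_lt_of_gt hdec).1
  have := (h.sRight_of_sLeft hk hdir hr1 (rr 1) (by omega) (by omega)).2
  omega

variable (h : IsAltSnake n r k rr ii jj) (hk : 2 ≤ k) (hconn : SegConnected n ii jj 0 r)
  (hdir : SLeft ii jj 0 (rr 1)) (hjoin : ii (rr 1 - 1) < ii (rr 1 + 1))
include h hk hconn hdir hjoin

theorem exists_gap_of_not_segConnected {p : ℕ} (hp1 : 2 ≤ p) (hp2 : p ≤ rr 1)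
    (hnc : ¬ SegConnected n (fun s => if s < p then ii s else ii (s + 1))
        (fun s => jj (s + 1)) 0 (r - 1)) :
    ∃ q, 1 ≤ q ∧ q < p ∧ q + 2 ≤ rr 1 ∧ jj (q + 2) < ii q := by
  have hr2 : rr 2 ≤ r := h.rr_le hk
  have hr12 : rr 1 < rr 2 := h.rrmono 1 (by omega)
  have nested : ∀ s i', 1 ≤ s → s + 2 ≤ rr 1 → i' < ii s → InIn n i' (jj (s + 1)) →
      ii s ≤ jj (s + 2) → ConnPair n (ii s) (jj (s + 1)) i' (jj (s + 2)) := by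
    intro s i' hs1 hs2 hi' hin hle
    have hj := (hdir (s + 1) (by omega) (by omega)).2
    exact ⟨Or.inr ⟨hi', hle, hj⟩, (hconn s (by omega) (by omega)).2.1.mono le_rfl hle hj.le, hin⟩
  simp only [SegConnected, not_forall] at hnc
  obtain ⟨s, hs1, hs2, hsc⟩ := hnc
  rcases lt_trichotomy (s + 1) p with hlt | rfl | hgt
  · rw [if_pos (by omega), if_pos hlt] at hsc
    refine ⟨s, by omega, by omega, by omega, not_le.mp fun hle => hsc ?_⟩
    exact nested s _ (by omega) (by omega) (hdir s (by omega) (by omega)).1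
      (h.mem (s + 1) (by omega) (by omega)) hle
  · rw [if_pos (by omega), if_neg (by omega)] at hsc
    rcases hp2.lt_or_eq with hlt | heq
    · refine ⟨s, by omega, by omega, by omega, not_le.mp fun hle => hsc ?_⟩
      have hi := (hdir s (by omega) (by omega)).1
      have hi' := (hdir (s + 1) (by omega) (by omega)).1
      exact nested s _ (by omega) (by omega) (hi'.trans hi)
        (hconn (s + 1) (by omega) (by omega)).2.2 hle
    · -- at `p = r₁` the pair in question straddles the first turn and is always connected
      exfalso
      have hpair := hconn (s + 1) (by omega) (by omega)
      have hturn : ii s < ii (s + 2) := by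
        convert hjoin using 2 <;> omega
      have hi := (h.sRight_of_sLeft hk hdir (by omega) (s + 1) (by omega) (by omega)).1
      have hov := hpair.1.le_and_lt_of_lt hi
      have hi' := (hdir s (by omega) (by omega)).1
      exact hsc ⟨Or.inl ⟨hturn, hov⟩, hpair.2.1.mono hi'.le (hturn.le.trans
        (hov.1.trans hov.2.le)) le_rfl, hpair.2.2⟩
  · rw [if_neg (by omega), if_neg (by omega)] at hsc
    exact absurd (hconn (s + 1) (by omega) (by omega)) hsc

/-- Were `[i_s, j_s]` to reach `i_q`, the left ends `i_v` (`q ≤ v < r₁`) could never drop below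
`i_s` without `[i_v, j_v]` overlapping `[i_s, j_s]`, contradicting `i_{r₁-1} < i_{r₁+1} ≤ i_s`. -/
theorem jj_lt_of_ii_lt {q s : ℕ} (hq1 : 1 ≤ q) (hq : q < rr 1) (hs1 : rr 1 < s)
    (hs2 : s ≤ rr 2) (his : ii s < ii q) : jj s < ii q := by
  have hr2 : rr 2 ≤ r := h.rr_le hk
  by_contra! hjs
  have hjq : jj q ≤ jj s := not_lt.mp fun hlt =>
    h.nonoverlap 1 q s le_rfl (by omega) hq1 hq hs1 (by omega) (Or.inr ⟨his, hjs, hlt⟩)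
  have hleft : ∀ v, q ≤ v → v < rr 1 → ii s ≤ ii v := by
    intro v hqv
    induction v, hqv using Nat.le_induction with
    | base => exact fun _ => his.le
    | succ v hqv ih =>
      intro hv
      refine not_lt.mp fun hlt => h.nonoverlap 1 (v + 1) s le_rfl (by omega) (by omega) hv hs1
        (by omega) (Or.inl ⟨hlt, ?_, ?_⟩)
      · have hpair := hconn v (by omega) (by omega)
        exact (ih (by omega)).trans
          (hpair.1.le_and_lt_of_gt (hdir v (by omega) (by omega)).1).1
      · exact (hdir.strictAntiOn_snd ⟨by omega, by omega⟩ ⟨by omega, by omega⟩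
          (by omega : q < v + 1)).trans_le hjq
  have hright := (h.sRight_of_sLeft hk hdir (by omega)).strictMonoOn_fst.monotoneOn
    (⟨by omega, by omega⟩ : rr 1 + 1 ∈ Set.Icc (rr 1 - 1 + 1) (rr 2))
    (⟨by omega, by omega⟩ : s ∈ Set.Icc (rr 1 - 1 + 1) (rr 2)) (by omega)
  have := hleft (rr 1 - 1) (by omega) (by omega)
  omega

theorem jj_lt_of_gap {q : ℕ} (hq1 : 1 ≤ q) (hq : q + 2 ≤ rr 1) (hgap : jj (q + 2) < ii q) :
    ∀ s, q + 2 ≤ s → s ≤ rr 2 → jj s < ii q := by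
  have hr2 : rr 2 ≤ r := h.rr_le hk
  intro s hqs
  induction s, hqs using Nat.le_induction with
  | base => exact fun _ => hgap
  | succ s hqs ih =>
    intro hs
    rcases Nat.lt_or_ge s (rr 1) with hs1 | hs1
    · exact (hdir s (by omega) (by omega)).2.trans (ih (by omega))
    · have hi := (h.sRight_of_sLeft hk hdir (by omega) s (by omega) hs).1
      have hpair := hconn s (by omega) (by omega)
      exact jj_lt_of_ii_lt h hk hconn hdir hjoin hq1 (by omega) (by omega) hs
        ((hpair.1.le_and_lt_of_lt hi).1.trans_lt (ih (by omega)))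

end IsAltSnake

theorem stmt_15_general (n r k : ℕ) (rr : ℕ → ℕ) (ii jj : ℕ → ℤ)
    (h : IsAltSnake n r k rr ii jj) (hk : 2 ≤ k)
    (hprime : SegPrime n k rr ii jj 0 r) (hstable : Stable k rr ii jj)
    (hdir : SLeft ii jj 0 (rr 1))
    (p : ℕ) (hp1 : 2 ≤ p) (hp2 : p ≤ rr 1)
    (hnc : ¬ SegConnected n (fun s => if s < p then ii s else ii (s + 1))
        (fun s => jj (s + 1)) 0 (r - 1)) :
    ∃ p', 1 ≤ p' ∧ p' < p ∧ p' + 1 < rr 1 ∧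
      ∀ s, p' + 2 ≤ s → s ≤ rr 2 → jj s < ii p' := by
  have hjoin := h.ii_sub_one_lt_ii_add_one hk hprime hstable hdir (hp1.trans hp2)
  obtain ⟨q, hq1, hqp, hq, hgap⟩ :=
    h.exists_gap_of_not_segConnected hk hprime.1 hdir hjoin hp1 hp2 hnc
  exact ⟨q, hq1, hqp, by omega, h.jj_lt_of_gap hk hprime.1 hdir hjoin hq1 hq hgap⟩

/-- Lemma (spnotconn): for a prime stable alternating snake with `𝐬(0,r_1) ∈ S_←` and
`2 ≤ p ≤ r_1`, if `𝐬_p = ([i_1,j_2],…,[i_{p−1},j_p]) ∨ 𝐬(p,r)` is not connected then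
there is `1 ≤ p' < min{p, r_1−1}` with `j_s < i_{p'}` for all `p' + 2 ≤ s ≤ r_2`. -/
theorem stmt_15 (n r k : ℕ) (hn : 1 ≤ n) (rr : ℕ → ℕ) (ii jj : ℕ → ℤ)
    (h : IsAltSnake n r k rr ii jj) (hk : 2 ≤ k)
    (hprime : SegPrime n k rr ii jj 0 r) (hstable : Stable k rr ii jj)
    (hdir : SLeft ii jj 0 (rr 1))
    (p : ℕ) (hp1 : 2 ≤ p) (hp2 : p ≤ rr 1)
    (hnc : ¬ SegConnected n (fun s => if s < p then ii s else ii (s + 1))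
        (fun s => jj (s + 1)) 0 (r - 1)) :
    ∃ p', 1 ≤ p' ∧ p' < p ∧ p' + 1 < rr 1 ∧
      ∀ s, p' + 2 ≤ s → s ≤ rr 2 → jj s < ii p' :=
  stmt_15_general n r k rr ii jj h hk hprime hstable hdir p hp1 hp2 hnc

end AltSnakePaper
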